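/- arXiv:1610.07534 — 5 statements merged into one kernel-verified Lean document; each statement's English description precedes it below -/
import Mathlib

section
/- Let g be a Lie algebra over a field K, let n be a natural number, and let E, F, H : Fin n → g and A : Fin n → Fin n → K satisfy ⁅E i, F j⁆ = (if i = j then H i else 0), ⁅H i, E j⁆ = A i j • E j, and ⁅H i, F j⁆ = −(A i j) • F j for all i, j. Suppose x : Fin n → K satisfies Σᵢ x i * A i j = 1 for every j. Define ρ = Σᵢ x i • H i, I₊ = Σᵢ E i, and I₋ = 2 • Σᵢ x i • F i. Then ⁅ρ, I₊⁆ = I₊, ⁅ρ, I₋⁆ = −I₋, and ⁅I₊, I₋⁆ = 2 • ρ; in other words (2•ρ, I₊, I₋) is an sl₂-triple in g. -/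
/-!
Each `E j` (resp. `F j`) is a common eigenvector of the `H i` with eigenvalues `A i j`
(resp. `-A i j`), so on it `ρ = ∑ i, x i • H i` acts by `∑ i, x i * A i j = 1` (resp. `-1`).
Since `⁅E i, F j⁆` vanishes off the diagonal, `⁅∑ i, E i, ∑ j, y j • F j⁆ = ∑ i, y i • H i`,
which for `y = 2 • x` gives `2 • ρ`.
-/

open Finset

section

variable {R L M ι : Type*} [CommRing R] [LieRing L] [LieAlgebra R L]
  [AddCommGroup M] [Module R M] [LieRingModule L M] [LieModule R L M]

theorem sum_smul_lie_of_forall_lie_eq_smul (s : Finset ι) (x c : ι → R) (h : ι → L) (v : M)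
    (hv : ∀ i, ⁅h i, v⁆ = c i • v) :
    ⁅∑ i ∈ s, x i • h i, v⁆ = (∑ i ∈ s, x i * c i) • v := by
  simp only [sum_lie, smul_lie, hv, smul_smul, sum_smul]

theorem sum_lie_sum_smul_of_lie_eq_ite [Fintype ι] [DecidableEq ι] (E F H : ι → L) (y : ι → R)
    (hEF : ∀ i j, ⁅E i, F j⁆ = if i = j then H i else 0) :
    ⁅∑ i, E i, ∑ j, y j • F j⁆ = ∑ i, y i • H i := by
  rw [sum_lie_sum]
  refine sum_congr rfl fun i _ => ?_
  simp only [lie_smul, hEF, smul_ite, smul_zero, sum_ite_eq, mem_univ, if_true]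

end

/-- If `E F H : Fin n → g` satisfy the Weyl-generator relations for a
Cartan matrix `A`, and `x : Fin n → K` satisfies `∑ i, x i * A i j = 1` for all `j`, then
with `ρ = ∑ i, x i • H i`, `I₊ = ∑ i, E i`, `I₋ = 2 • ∑ i, x i • F i` one has
`⁅ρ, I₊⁆ = I₊`, `⁅ρ, I₋⁆ = -I₋` and `⁅I₊, I₋⁆ = 2 • ρ`, i.e. `(2•ρ, I₊, I₋)` is a
principal `sl₂`-triple. -/
theorem principal_sl2_triple
    {K g : Type*} [Field K] [LieRing g] [LieAlgebra K g] (n : ℕ)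
    (E F H : Fin n → g) (A : Fin n → Fin n → K)
    (hEF : ∀ i j, ⁅E i, F j⁆ = if i = j then H i else 0)
    (hHE : ∀ i j, ⁅H i, E j⁆ = A i j • E j)
    (hHF : ∀ i j, ⁅H i, F j⁆ = -(A i j) • F j)
    (x : Fin n → K) (hx : ∀ j, ∑ i, x i * A i j = 1) :
    ⁅∑ i, x i • H i, ∑ i, E i⁆ = ∑ i, E i ∧
    ⁅∑ i, x i • H i, 2 • ∑ i, x i • F i⁆ = -(2 • ∑ i, x i • F i) ∧
    ⁅∑ i, E i, 2 • ∑ i, x i • F i⁆ = 2 • ∑ i, x i • H i := by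
  have hρE : ∀ j, ⁅∑ i, x i • H i, E j⁆ = E j := fun j => by
    rw [sum_smul_lie_of_forall_lie_eq_smul _ x (A · j) H (E j) (hHE · j), hx, one_smul]
  have hρF : ∀ j, ⁅∑ i, x i • H i, F j⁆ = -F j := fun j => by
    rw [sum_smul_lie_of_forall_lie_eq_smul _ x (-A · j) H (F j) (hHF · j)]
    simp only [mul_neg, sum_neg_distrib, hx, neg_smul, one_smul]
  refine ⟨?_, ?_, ?_⟩
  · simp only [lie_sum, hρE]
  · simp only [lie_nsmul, lie_sum, lie_smul, hρF, smul_neg, sum_neg_distrib]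
  · rw [lie_nsmul, sum_lie_sum_smul_of_lie_eq_ite E F H x hEF]
end

section
/- Let L be a Lie algebra over a commutative ring that is the internal direct sum of two Lie subalgebras L₊ and L₋ (every element of L is uniquely the sum of an element of L₊ and an element of L₋, and both L₊ and L₋ are closed under the bracket), and let π : L → L be the linear projection onto L₊ with kernel L₋. Then for any P, Q ∈ L with ⁅P, Q⁆ = 0 one has π⁅π Q, P⁆ − π⁅π P, Q⁆ + ⁅π P, π Q⁆ = 0. -/
/-!
Writing `x = π x + (x - π x)` splits every element into its `L₊`- and `L₋`-parts. Since both
parts are subalgebras, `π` kills the bracket of the two `L₋`-parts and fixes the bracket of the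
two `L₊`-parts; expanding `π ⁅x - π x, y - π y⁆ = 0` therefore shows that `π` is a Rota–Baxter
operator of weight `-1`. Applied to `P` and `Q`, that identity turns the left-hand side into
`-π ⁅P, Q⁆`, which vanishes because `P` and `Q` commute.
-/

section ProjectionAlongSubalgebras

variable {R L : Type*} [CommRing R] [LieRing L] [LieAlgebra R L]
  {p q : LieSubalgebra R L} {π : L →ₗ[R] L}

theorem sub_map_self_mem (hmem : ∀ x, π x ∈ p) (hid : ∀ x ∈ p, π x = x)
    (hker : ∀ x, π x = 0 ↔ x ∈ q) (x : L) : x - π x ∈ q := by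
  rw [← hker, map_sub, hid _ (hmem x), sub_self]

theorem lie_map_map_eq (hmem : ∀ x, π x ∈ p) (hid : ∀ x ∈ p, π x = x)
    (hker : ∀ x, π x = 0 ↔ x ∈ q) (x y : L) :
    ⁅π x, π y⁆ = π (⁅π x, y⁆ + ⁅x, π y⁆ - ⁅x, y⁆) := by
  have hminus : π ⁅x - π x, y - π y⁆ = 0 := (hker _).2 <|
    q.lie_mem (sub_map_self_mem hmem hid hker x) (sub_map_self_mem hmem hid hker y)
  have hplus : π ⁅π x, π y⁆ = ⁅π x, π y⁆ := hid _ (p.lie_mem (hmem x) (hmem y))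
  simp only [sub_lie, lie_sub, map_sub, map_add, hplus] at hminus ⊢
  linear_combination (norm := abel) hminus

end ProjectionAlongSubalgebras

theorem zero_curvature_projection_general
    {R L : Type*} [CommRing R] [LieRing L] [LieAlgebra R L]
    (p q : LieSubalgebra R L)
    (π : L →ₗ[R] L)
    (hmem : ∀ x, π x ∈ p)
    (hid : ∀ x ∈ p, π x = x)
    (hker : ∀ x, π x = 0 ↔ x ∈ q)
    (P Q : L) (hPQ : ⁅P, Q⁆ = 0) :
    π ⁅π Q, P⁆ - π ⁅π P, Q⁆ + ⁅π P, π Q⁆ = 0 := by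
  rw [lie_map_map_eq hmem hid hker, ← lie_skew, hPQ, map_neg, map_sub, map_add, map_zero]
  abel

/-- Let `L` be a Lie algebra over a commutative ring which is the internal
direct sum of two Lie subalgebras `p = L₊` and `q = L₋` (i.e. the underlying submodules are
complementary), and let `π : L → L` be the linear projection onto `L₊` along `L₋`
(characterised by: `π` takes values in `L₊`, is the identity on `L₊`, and vanishes exactly
on `L₋`).  Then for any `P Q : L` with `⁅P, Q⁆ = 0` one has
`π ⁅π Q, P⁆ - π ⁅π P, Q⁆ + ⁅π P, π Q⁆ = 0`. -/
theorem zero_curvature_projection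
    {R L : Type*} [CommRing R] [LieRing L] [LieAlgebra R L]
    (p q : LieSubalgebra R L)
    (hcompl : IsCompl p.toSubmodule q.toSubmodule)
    (π : L →ₗ[R] L)
    (hmem : ∀ x, π x ∈ p)
    (hid : ∀ x ∈ p, π x = x)
    (hker : ∀ x, π x = 0 ↔ x ∈ q)
    (P Q : L) (hPQ : ⁅P, Q⁆ = 0) :
    π ⁅π Q, P⁆ - π ⁅π P, Q⁆ + ⁅π P, π Q⁆ = 0 :=
  zero_curvature_projection_general p q π hmem hid hker P Q hPQ
end

section
/- Let g be a real Lie algebra whose underlying vector space is a finite-dimensional normed real vector space, and let B be an invariant bilinear form on g. Let A, R, S : ℝ × ℝ → g (with coordinates written (x, λ)), where R and A are continuously differentiable and S is twice continuously differentiable. Suppose that for all (x, λ): ∂R/∂x (x,λ) = ⁅R(x,λ), A(x,λ)⁆, ∂S/∂x (x,λ) = ⁅S(x,λ), A(x,λ)⁆, and ⁅R(x,λ), S(x,λ)⁆ = 0. Then for each fixed λ, the function x ↦ B(R(x,λ), ∂S/∂λ (x,λ)) is constant in x. -/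
/-!
Differentiate `x ↦ B (R, ∂_λ S)`. By Schwarz's theorem and the equation for `S`,
`∂ₓ ∂_λ S = ∂_λ ∂ₓ S = ⁅∂_λ S, A⁆ + ⁅S, ∂_λ A⁆`, so the derivative is
`B (⁅R, A⁆, ∂_λ S) + B (R, ⁅∂_λ S, A⁆) + B (R, ⁅S, ∂_λ A⁆)`. By invariance and antisymmetry
the first two terms cancel, and the last one is `B (⁅R, S⁆, ∂_λ A) = 0`.
-/

theorem invariantForm_lie_terms_cancel {K M : Type*} [CommRing K] [AddCommGroup M] [Module K M]
    {L : M →ₗ[K] M →ₗ[K] M} {B : M →ₗ[K] M →ₗ[K] K}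
    (hanti : ∀ x y, L x y = - L y x) (hinv : ∀ x y z, B (L x y) z = B x (L y z))
    {r s : M} (hrs : L r s = 0) (a b t : M) :
    B r (L s b + L t a) + B (L r a) t = 0 := by
  rw [map_add, ← hinv r s b, hrs, hinv r a t, hanti a t]
  simp

section Slices

variable {E : Type*} [NormedAddCommGroup E] [NormedSpace ℝ E] {f : ℝ × ℝ → E} {x l : ℝ}

theorem DifferentiableAt.hasDerivAt_fst_slice (hf : DifferentiableAt ℝ f (x, l)) :
    HasDerivAt (fun s => f (s, l)) (fderiv ℝ f (x, l) (1, 0)) x :=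
  hf.hasFDerivAt.comp_hasDerivAt x ((hasDerivAt_id x).prodMk (hasDerivAt_const x l))

theorem DifferentiableAt.hasDerivAt_snd_slice (hf : DifferentiableAt ℝ f (x, l)) :
    HasDerivAt (fun m => f (x, m)) (fderiv ℝ f (x, l) (0, 1)) l :=
  hf.hasFDerivAt.comp_hasDerivAt l ((hasDerivAt_const l x).prodMk (hasDerivAt_id l))

theorem fderiv_apply_fst_eq_of_deriv_fst_slice {h : ℝ × ℝ → E} (hf : Differentiable ℝ f)
    (hfh : ∀ x l, deriv (fun s => f (s, l)) x = h (x, l)) (p : ℝ × ℝ) :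
    fderiv ℝ f p (1, 0) = h p := by
  rw [← hfh, (hf p).hasDerivAt_fst_slice.deriv]

theorem ContDiff.hasDerivAt_fst_slice_fderiv_snd {h : ℝ × ℝ → E} {h' : E}
    (hf : ContDiff ℝ 2 f) (hfh : ∀ p, fderiv ℝ f p (1, 0) = h p)
    (hh : HasDerivAt (fun m => h (x, m)) h' l) :
    HasDerivAt (fun s => fderiv ℝ f (s, l) (0, 1)) h' x := by
  have hf' : Differentiable ℝ (fderiv ℝ f) :=
    (hf.fderiv_right le_rfl).differentiable one_ne_zero
  have hsymm := hf.contDiffAt.isSymmSndFDerivAt (x := (x, l)) (by simp)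
  have hx := (hf' (x, l)).hasDerivAt_fst_slice.clm_apply (hasDerivAt_const x ((0 : ℝ), (1 : ℝ)))
  have hl := (hf' (x, l)).hasDerivAt_snd_slice.clm_apply (hasDerivAt_const l ((1 : ℝ), (0 : ℝ)))
  simp only [hfh, map_zero, add_zero] at hx hl
  rwa [hsymm.eq, hl.unique hh] at hx

end Slices

theorem pairing_resolvent_lambda_deriv_constant_general
    {g : Type*} [NormedAddCommGroup g] [NormedSpace ℝ g] [FiniteDimensional ℝ g]
    (L : g →ₗ[ℝ] g →ₗ[ℝ] g)
    (hanti : ∀ x y, L x y = - L y x)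
    (B : g →ₗ[ℝ] g →ₗ[ℝ] ℝ)
    (hinv : ∀ x y z, B (L x y) z = B x (L y z))
    (A R S : ℝ × ℝ → g)
    (hA : ContDiff ℝ 1 A) (hR : ContDiff ℝ 1 R) (hS : ContDiff ℝ 2 S)
    (hReq : ∀ x l, deriv (fun s => R (s, l)) x = L (R (x, l)) (A (x, l)))
    (hSeq : ∀ x l, deriv (fun s => S (s, l)) x = L (S (x, l)) (A (x, l)))
    (hcomm : ∀ x l, L (R (x, l)) (S (x, l)) = 0) :
    ∀ (l x₁ x₂ : ℝ),
      B (R (x₁, l)) (deriv (fun m => S (x₁, m)) l)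
        = B (R (x₂, l)) (deriv (fun m => S (x₂, m)) l) := by
  intro l x₁ x₂
  have hAd : Differentiable ℝ A := hA.differentiable one_ne_zero
  have hRd : Differentiable ℝ R := hR.differentiable one_ne_zero
  have hSd : Differentiable ℝ S := hS.differentiable two_ne_zero
  have hSmixed (x : ℝ) : HasDerivAt (fun s => fderiv ℝ S (s, l) (0, 1))
      (L (S (x, l)) (fderiv ℝ A (x, l) (0, 1)) + L (fderiv ℝ S (x, l) (0, 1)) (A (x, l))) x :=
    hS.hasDerivAt_fst_slice_fderiv_snd (h := fun p => L.toContinuousBilinearMap (S p) (A p))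
      (fderiv_apply_fst_eq_of_deriv_fst_slice hSd hSeq)
      (L.toContinuousBilinearMap.hasDerivAt_of_bilinear
        (fun _ => (hSd (x, l)).hasDerivAt_snd_slice) (fun _ => (hAd (x, l)).hasDerivAt_snd_slice))
  have hpairing (x : ℝ) : HasDerivAt (fun s => B (R (s, l)) (fderiv ℝ S (s, l) (0, 1))) 0 x := by
    have := B.toContinuousBilinearMap.hasDerivAt_of_bilinear
      (fun _ => (hRd (x, l)).hasDerivAt_fst_slice) (fun _ => hSmixed x)
    simp only [fderiv_apply_fst_eq_of_deriv_fst_slice (h := fun p => L (R p) (A p)) hRd hReq,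
      LinearMap.toContinuousBilinearMap_apply] at this
    rwa [invariantForm_lie_terms_cancel hanti hinv (hcomm x l)] at this
  have hsnd (x : ℝ) : deriv (fun m => S (x, m)) l = fderiv ℝ S (x, l) (0, 1) :=
    (hSd (x, l)).hasDerivAt_snd_slice.deriv
  rw [hsnd, hsnd]
  exact is_const_of_deriv_eq_zero (fun x => (hpairing x).differentiableAt)
    (fun x => (hpairing x).deriv) x₁ x₂

/-- Let `g` be a real Lie algebra whose underlying vector space is a
finite-dimensional normed real vector space (Lie bracket encoded by an antisymmetric
bilinear map `L` satisfying the Jacobi identity), and let `B` be an invariant bilinear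
form on `g`.  Let `A R S : ℝ × ℝ → g` (coordinates `(x, λ)`) with `A, R` continuously
differentiable and `S` twice continuously differentiable, and suppose that for all
`(x, λ)`:  `∂R/∂x = ⁅R, A⁆`, `∂S/∂x = ⁅S, A⁆` and `⁅R, S⁆ = 0`.  Then for each fixed `λ`
the function `x ↦ B (R (x,λ)) (∂S/∂λ (x,λ))` is constant in `x`. -/
theorem pairing_resolvent_lambda_deriv_constant
    {g : Type*} [NormedAddCommGroup g] [NormedSpace ℝ g] [FiniteDimensional ℝ g]
    (L : g →ₗ[ℝ] g →ₗ[ℝ] g)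
    (hanti : ∀ x y, L x y = - L y x)
    (hjacobi : ∀ x y z, L x (L y z) = L (L x y) z + L y (L x z))
    (B : g →ₗ[ℝ] g →ₗ[ℝ] ℝ)
    (hinv : ∀ x y z, B (L x y) z = B x (L y z))
    (A R S : ℝ × ℝ → g)
    (hA : ContDiff ℝ 1 A) (hR : ContDiff ℝ 1 R) (hS : ContDiff ℝ 2 S)
    (hReq : ∀ x l, deriv (fun s => R (s, l)) x = L (R (x, l)) (A (x, l)))
    (hSeq : ∀ x l, deriv (fun s => S (s, l)) x = L (S (x, l)) (A (x, l)))
    (hcomm : ∀ x l, L (R (x, l)) (S (x, l)) = 0) :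
    ∀ (l x₁ x₂ : ℝ),
      B (R (x₁, l)) (deriv (fun m => S (x₁, m)) l)
        = B (R (x₂, l)) (deriv (fun m => S (x₂, m)) l) :=
  pairing_resolvent_lambda_deriv_constant_general L hanti B hinv A R S hA hR hS hReq hSeq hcomm
end

section
/- Let g be a Lie algebra over a field K and B a symmetric invariant bilinear form on g. Let ρ, L₁, K₁, L₂, K₂ ∈ g and m, h, c ∈ K with h ≠ 0. Assume ⁅ρ, L₁⁆ = m • L₁, ⁅ρ, K₁⁆ = (m − h) • K₁, ⁅K₁, L₂⁆ + ⁅L₁, K₂⁆ = 0, and B(L₁, K₂) + B(L₂, K₁) = c. Then B(L₁, K₂) = h⁻¹ (h − m) c and B(L₂, K₁) = h⁻¹ m c. -/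
/-! Pair the eigenvalue relations with `K₂` and `L₂` through the invariant form: invariance
turns both pairings into `B ρ ·`, and `⁅K₁, L₂⁆ + ⁅L₁, K₂⁆ = 0` then gives the linear relation
`m B(L₁, K₂) + (m - h) B(L₂, K₁) = 0`. Together with `B(L₁, K₂) + B(L₂, K₁) = c` this is a
2 × 2 system of determinant `h`. -/

theorem eigenvalue_mul_apply_eq_apply_lie {R L : Type*} [CommRing R] [LieRing L]
    [LieAlgebra R L] {B : L →ₗ[R] L →ₗ[R] R} (hinv : ∀ x y z, B ⁅x, y⁆ z = B x ⁅y, z⁆)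
    {ρ x : L} {a : R} (hx : ⁅ρ, x⁆ = a • x) (y : L) :
    a * B x y = B ρ ⁅x, y⁆ := by
  rw [← hinv, hx, map_smul, LinearMap.smul_apply, smul_eq_mul]

theorem eq_of_mul_add_sub_mul_eq_zero {K : Type*} [Field K] {m h c u v : K} (hh : h ≠ 0)
    (hrel : m * u + (m - h) * v = 0) (hsum : u + v = c) :
    u = h⁻¹ * (h - m) * c ∧ v = h⁻¹ * m * c := by
  constructor
  · field_simp
    linear_combination (h - m) * hsum + hrel
  · field_simp
    linear_combination m * hsum - hrel

/-- Let `g` be a Lie algebra over a field `K` and `B` a symmetric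
invariant bilinear form on `g`.  Let `ρ, L₁, K₁, L₂, K₂ ∈ g` and `m, h, c ∈ K` with
`h ≠ 0`.  Assume `⁅ρ, L₁⁆ = m • L₁`, `⁅ρ, K₁⁆ = (m - h) • K₁`,
`⁅K₁, L₂⁆ + ⁅L₁, K₂⁆ = 0` and `B L₁ K₂ + B L₂ K₁ = c`.  Then
`B L₁ K₂ = h⁻¹ * (h - m) * c` and `B L₂ K₁ = h⁻¹ * m * c`. -/
theorem pairing_L_K_values
    {K g : Type*} [Field K] [LieRing g] [LieAlgebra K g]
    (B : g →ₗ[K] g →ₗ[K] K)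
    (hsym : ∀ x y, B x y = B y x)
    (hinv : ∀ x y z, B ⁅x, y⁆ z = B x ⁅y, z⁆)
    (ρ L₁ K₁ L₂ K₂ : g) (m h c : K) (hh : h ≠ 0)
    (hL₁ : ⁅ρ, L₁⁆ = m • L₁)
    (hK₁ : ⁅ρ, K₁⁆ = (m - h) • K₁)
    (hcomm : ⁅K₁, L₂⁆ + ⁅L₁, K₂⁆ = 0)
    (hc : B L₁ K₂ + B L₂ K₁ = c) :
    B L₁ K₂ = h⁻¹ * (h - m) * c ∧ B L₂ K₁ = h⁻¹ * m * c := by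
  have hrel : m * B L₁ K₂ + (m - h) * B L₂ K₁ = 0 := by
    rw [hsym L₂, eigenvalue_mul_apply_eq_apply_lie hinv hL₁,
      eigenvalue_mul_apply_eq_apply_lie hinv hK₁, ← map_add, add_comm, hcomm, map_zero]
  exact eq_of_mul_add_sub_mul_eq_zero hh hrel hc
end

section
/- Fix n ∈ ℕ. Let A, R, g : ℝ → Matrix (Fin n) (Fin n) ℝ be differentiable functions, with g t invertible for every t, and suppose deriv R t = R t * A t − A t * R t for all t. Define Ã t = g t * A t * (g t)⁻¹ − (deriv g t) * (g t)⁻¹ and R̃ t = g t * R t * (g t)⁻¹. Then deriv R̃ t = R̃ t * Ã t − Ã t * R̃ t for all t. -/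
/-!
Differentiate `g R g⁻¹` by the product rule, using `(g⁻¹)' = -g⁻¹ g' g⁻¹`. After substituting
`R' = R A - A R` and cancelling `g⁻¹ g = 1`, the terms regroup into `R̃ Ã - Ã R̃`.
-/

attribute [local instance] Matrix.normedAddCommGroup Matrix.normedSpace

open scoped Ring

section NormedRing

variable {𝕜 𝔸 : Type*} [NontriviallyNormedField 𝕜] [NormedRing 𝔸] [NormedAlgebra 𝕜 𝔸]
  [HasSummableGeomSeries 𝔸] {t : 𝕜}

theorem HasDerivAt.ringInverse {g : 𝕜 → 𝔸} {g' : 𝔸} (hg : HasDerivAt g g' t)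
    (hunit : IsUnit (g t)) :
    HasDerivAt (fun s => (g s)⁻¹ʳ) (-((g t)⁻¹ʳ * g' * (g t)⁻¹ʳ)) t := by
  obtain ⟨u, hu⟩ := hunit
  have hinv := hu ▸ hasFDerivAt_ringInverse (𝕜 := 𝕜) u
  simpa [Function.comp_def, ← hu] using hinv.comp_hasDerivAt t hg

theorem HasDerivAt.conj_ringInverse_of_commutator {R g : 𝕜 → 𝔸} {a g' : 𝔸}
    (hR : HasDerivAt R (R t * a - a * R t) t) (hg : HasDerivAt g g' t) (hunit : IsUnit (g t)) :
    HasDerivAt (fun s => g s * R s * (g s)⁻¹ʳ)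
      (g t * R t * (g t)⁻¹ʳ * (g t * a * (g t)⁻¹ʳ - g' * (g t)⁻¹ʳ)
        - (g t * a * (g t)⁻¹ʳ - g' * (g t)⁻¹ʳ) * (g t * R t * (g t)⁻¹ʳ)) t := by
  refine ((hg.fun_mul hR).fun_mul (hg.ringInverse hunit)).congr_deriv ?_
  have cancel (x : 𝔸) : (g t)⁻¹ʳ * (g t * x) = x := by
    rw [← mul_assoc, Ring.inverse_mul_cancel _ hunit, one_mul]
  simp only [add_mul, mul_sub, sub_mul, mul_neg, mul_assoc, cancel]
  abel

end NormedRing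

theorem gauge_transform_of_resolvent_general
    {n : ℕ} (A R g : ℝ → Matrix (Fin n) (Fin n) ℝ)
    (hR : Differentiable ℝ R) (hg : Differentiable ℝ g)
    (hunit : ∀ t, IsUnit (g t))
    (hlax : ∀ t, deriv R t = R t * A t - A t * R t) :
    ∀ t : ℝ,
      deriv (fun s => g s * R s * (g s)⁻¹) t
        = (g t * R t * (g t)⁻¹) * (g t * A t * (g t)⁻¹ - deriv g t * (g t)⁻¹)
          - (g t * A t * (g t)⁻¹ - deriv g t * (g t)⁻¹) * (g t * R t * (g t)⁻¹) := by
  intro t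
  simp only [Matrix.nonsing_inv_eq_ringInverse]
  -- The operator norm makes matrices a normed algebra; its topology is definitionally the
  -- entrywise one, so derivatives for either norm are the same terms.
  open scoped Matrix.Norms.Operator in
  exact (((hR t).hasDerivAt.congr_deriv (hlax t)).conj_ringInverse_of_commutator
    (hg t).hasDerivAt (hunit t)).deriv

/-- Let `A R g : ℝ → Matrix (Fin n) (Fin n) ℝ` be differentiable, with
`g t` invertible for every `t`, and suppose `deriv R t = R t * A t - A t * R t` for all
`t`.  With `Ã t = g t * A t * (g t)⁻¹ - (deriv g t) * (g t)⁻¹` and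
`R̃ t = g t * R t * (g t)⁻¹` one has `deriv R̃ t = R̃ t * Ã t - Ã t * R̃ t` for all `t`:
the gauge transform of a resolvent is a resolvent of the gauge-transformed Lax operator. -/
theorem gauge_transform_of_resolvent
    {n : ℕ} (A R g : ℝ → Matrix (Fin n) (Fin n) ℝ)
    (hA : Differentiable ℝ A) (hR : Differentiable ℝ R) (hg : Differentiable ℝ g)
    (hunit : ∀ t, IsUnit (g t))
    (hlax : ∀ t, deriv R t = R t * A t - A t * R t) :
    ∀ t : ℝ,
      deriv (fun s => g s * R s * (g s)⁻¹) t
        = (g t * R t * (g t)⁻¹) * (g t * A t * (g t)⁻¹ - deriv g t * (g t)⁻¹)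
          - (g t * A t * (g t)⁻¹ - deriv g t * (g t)⁻¹) * (g t * R t * (g t)⁻¹) :=
  gauge_transform_of_resolvent_general A R g hR hg hunit hlax
end
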